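/- arXiv:2207.05997 — 3 statements merged into one kernel-verified Lean document; each statement's English description precedes it below -/
import Mathlib

section
/- Let (X_j)_{j∈ℕ} be i.i.d. standard Gaussian random variables and let ε > 0, M ∈ ℕ. Then P( sup_{m ≥ M} |(1/m)·∑_{j=1}^m (X_j² − 1)| ≥ ε ) ≤ 2·exp(−(M/2)·(ε − log(1+ε))). -/
open MeasureTheory ProbabilityTheory Real
open scoped NNReal ENNReal

lemma log_ge_quad {x : ℝ} (hx : 0 ≤ x) : x - x^2/2 ≤ Real.log (1+x) := by
  set f : ℝ → ℝ := fun y => Real.log (1+y) - y + y^2/2 with hf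
  have hderiv : ∀ y : ℝ, 0 < y → HasDerivAt f ((1+y)⁻¹ - 1 + y) y := by
    intro y hy
    have h1 : HasDerivAt (fun z : ℝ => 1+z) 1 y := (hasDerivAt_id y).const_add 1
    have h2 : HasDerivAt (fun z : ℝ => Real.log (1+z)) ((1+y)⁻¹ * 1) y :=
      (Real.hasDerivAt_log (by linarith)).comp y h1
    have h3 : HasDerivAt (fun z : ℝ => z^2/2) ((2:ℕ) * y^1 / 2) y :=
      (hasDerivAt_pow 2 y).div_const 2
    have := (h2.sub (hasDerivAt_id y)).add h3
    refine this.congr_deriv ?_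
    push_cast
    ring
  have hmono : MonotoneOn f (Set.Ici 0) := by
    have hc : ∀ y ∈ Set.Ici (0:ℝ), ContinuousWithinAt f (Set.Ici 0) y := by
      intro y hy
      have h1 : ContinuousAt (fun z : ℝ => Real.log (1+z)) y := by
        have : (1:ℝ) + y ≠ 0 := by simp at hy; intro h; nlinarith
        exact (Real.continuousAt_log this).comp (by fun_prop)
      exact ((h1.sub continuousAt_id).add (by fun_prop)).continuousWithinAt
    refine monotoneOn_of_deriv_nonneg (convex_Ici 0) hc ?_ ?_
    · intro y hy
      rw [interior_Ici] at hy
      exact (hderiv y hy).differentiableAt.differentiableWithinAt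
    · intro y hy
      rw [interior_Ici] at hy
      rw [(hderiv y hy).deriv]
      have hy0 : (0:ℝ) < 1 + y := by simp at hy; linarith
      have h1 : (1+y)⁻¹ - 1 + y = y^2/(1+y) := by
        field_simp
        ring
      rw [h1]
      exact div_nonneg (sq_nonneg y) hy0.le
  have h0 : f 0 ≤ f x := hmono (Set.self_mem_Ici) hx hx
  simp only [hf] at h0
  norm_num at h0
  linarith

lemma gauss_int_aux {t : ℝ} (ht : 2*t < 1) :
    Integrable (fun x : ℝ => Real.exp (t * x^2)) (gaussianReal 0 1) ∧
    ∫ x, Real.exp (t * x^2) ∂(gaussianReal 0 1) = (Real.sqrt (1-2*t))⁻¹ := by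
  have hb : 0 < 1/2 - t := by linarith
  have hγ : gaussianReal 0 1 = MeasureTheory.volume.withDensity
      (fun x => ((gaussianPDFReal 0 1 x).toNNReal : ENNReal)) := by
    rw [gaussianReal_of_var_ne_zero 0 one_ne_zero]
    rfl
  have hfm : Measurable fun x => (gaussianPDFReal 0 1 x).toNNReal :=
    (measurable_gaussianPDFReal 0 1).real_toNNReal
  have hpdf : ∀ x : ℝ, gaussianPDFReal 0 1 x = (Real.sqrt (2*π))⁻¹ * Real.exp (-(1/2) * x^2) := by
    intro x
    unfold gaussianPDFReal
    simp only [NNReal.coe_one, mul_one, sub_zero]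
    ring_nf
  have hsmul : ∀ x : ℝ, (gaussianPDFReal 0 1 x).toNNReal • Real.exp (t * x^2)
      = (Real.sqrt (2*π))⁻¹ * Real.exp (-(1/2 - t) * x^2) := by
    intro x
    rw [NNReal.smul_def, Real.coe_toNNReal _ (gaussianPDFReal_nonneg 0 1 x), smul_eq_mul, hpdf x,
      mul_assoc, ← Real.exp_add]
    ring_nf
  constructor
  · rw [hγ, integrable_withDensity_iff_integrable_smul hfm]
    have : Integrable (fun x : ℝ => (Real.sqrt (2*π))⁻¹ * Real.exp (-(1/2 - t) * x^2)) :=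
      (integrable_exp_neg_mul_sq hb).const_mul _
    exact this.congr (Filter.Eventually.of_forall fun x => (hsmul x).symm)
  · rw [hγ, integral_withDensity_eq_integral_smul hfm]
    rw [integral_congr_ae (Filter.Eventually.of_forall hsmul)]
    rw [integral_const_mul, integral_gaussian]
    rw [← Real.sqrt_inv (2*π), ← Real.sqrt_mul (by positivity), ← Real.sqrt_inv (1-2*t)]
    congr 1
    have hπ : (0:ℝ) < π := Real.pi_pos
    have hπ' : π ≠ 0 := hπ.ne'
    have hb' : 1/2 - t ≠ 0 := hb.ne'
    have h1 : 1 - 2*t ≠ 0 := by intro h; apply hb'; linarith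
    field_simp

lemma core_maximal {Ω : Type*} [MeasureSpace Ω] [IsProbabilityMeasure (ℙ : Measure Ω)]
    (X : ℕ → Ω → ℝ) (hmeas : ∀ j, Measurable (X j))
    (hindep : iIndepFun X ℙ)
    (hgauss : ∀ j, Measure.map (X j) ℙ = gaussianReal 0 1)
    {t : ℝ} (ht : 2*t < 1) (M : ℕ) {a : ℝ} (ha : 0 < a) :
    ℙ {ω | ∃ m : ℕ, M ≤ m ∧
        a * (Real.exp (-t) * (Real.sqrt (1-2*t))⁻¹)^m
          ≤ Real.exp (t * ∑ j ∈ Finset.Icc 1 m, ((X j ω)^2 - 1)) } ≤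
      ENNReal.ofReal a⁻¹ := by
  set K : ℝ := Real.exp (-t) * (Real.sqrt (1-2*t))⁻¹ with hKdef
  have hsqrt : 0 < Real.sqrt (1-2*t) := Real.sqrt_pos.2 (by linarith)
  have hK : 0 < K := by positivity
  set Z : ℕ → Ω → ℝ := fun j ω => (X j ω)^2 - 1 with hZdef
  have hZmeas : ∀ j, Measurable (Z j) := fun j => ((hmeas j).pow_const 2).sub measurable_const
  have hZindep : iIndepFun Z ℙ :=
    hindep.comp (fun _ x => x^2 - 1) (fun _ => (measurable_id.pow_const 2).sub measurable_const)
  -- per-step integrability and mean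
  obtain ⟨hgi, hgint⟩ := gauss_int_aux ht
  have heq : ∀ x : ℝ, Real.exp (t * (x^2-1)) = Real.exp (-t) * Real.exp (t * x^2) := by
    intro x; rw [← Real.exp_add]; ring_nf
  have hmg : Measurable fun x : ℝ => Real.exp (t * (x^2 - 1)) := by fun_prop
  have hgi' : Integrable (fun x => Real.exp (t*(x^2-1))) (gaussianReal 0 1) :=
    (hgi.const_mul (Real.exp (-t))).congr (Filter.Eventually.of_forall fun x => (heq x).symm)
  have hgval : ∫ x, Real.exp (t*(x^2-1)) ∂(gaussianReal 0 1) = K := by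
    rw [integral_congr_ae (Filter.Eventually.of_forall heq), integral_const_mul, hgint]
  have hstep : ∀ j, Integrable (fun ω => Real.exp (t * Z j ω)) ℙ ∧
      ∫ ω, Real.exp (t * Z j ω) ∂ℙ = K := by
    intro j
    constructor
    · have := (integrable_map_measure hmg.aestronglyMeasurable (hmeas j).aemeasurable).mp
        (by rw [hgauss j]; exact hgi')
      exact this
    · rw [show (fun ω => Real.exp (t * Z j ω)) = fun ω => Real.exp (t * ((X j ω)^2 - 1)) from rfl]
      rw [← integral_map (hmeas j).aemeasurable hmg.aestronglyMeasurable, hgauss j]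
      exact hgval
  set W : ℕ → Ω → ℝ := fun n ω => Real.exp (t * ∑ j ∈ Finset.Icc 1 n, Z j ω) * (K⁻¹)^n
    with hWdef
  have hWint : ∀ n, Integrable (W n) ℙ := by
    intro n
    have h := (hZindep.integrable_exp_mul_sum hZmeas (s := Finset.Icc 1 n)
      (fun i _ => (hstep i).1)).mul_const ((K⁻¹)^n)
    exact h.congr (Filter.Eventually.of_forall fun ω => by simp [hWdef, Finset.sum_apply])
  have hWmean : ∀ n, ∫ ω, W n ω ∂ℙ = 1 := by
    intro n
    have hmgf : mgf (∑ j ∈ Finset.Icc 1 n, Z j) ℙ t = K ^ n := by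
      rw [hZindep.mgf_sum hZmeas]
      have hj : ∀ j ∈ Finset.Icc 1 n, mgf (Z j) ℙ t = K := fun j _ => (hstep j).2
      rw [Finset.prod_congr rfl hj]
      simp [Finset.prod_const, Nat.card_Icc]
    have h1 : ∫ ω, W n ω ∂ℙ
        = (∫ ω, Real.exp (t * (∑ j ∈ Finset.Icc 1 n, Z j) ω) ∂ℙ) * (K⁻¹)^n := by
      rw [← integral_mul_const]
      exact integral_congr_ae (Filter.Eventually.of_forall fun ω => by
        simp [hWdef, Finset.sum_apply])
    have h2 : ∫ ω, Real.exp (t * (∑ j ∈ Finset.Icc 1 n, Z j) ω) ∂ℙ = K ^ n := hmgf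
    rw [h1, h2, ← mul_pow, mul_inv_cancel₀ hK.ne', one_pow]
  set 𝒢 := Filtration.natural X (fun j => (hmeas j).stronglyMeasurable) with h𝒢
  have hle : ∀ j n : ℕ, j ≤ n → MeasurableSpace.comap (X j) inferInstance ≤ 𝒢 n := by
    intro j n hjn
    have h : MeasurableSpace.comap (X j) inferInstance ≤
        ⨆ k, ⨆ _ : k ≤ n, MeasurableSpace.comap (X k) inferInstance :=
      le_biSup (fun k => MeasurableSpace.comap (X k) inferInstance) hjn
    exact h
  have hXmeas𝒢 : ∀ j n : ℕ, j ≤ n → Measurable[𝒢 n] (X j) :=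
    fun j n hjn => (comap_measurable (X j)).mono (hle j n hjn) le_rfl
  have hWadapted : ∀ n, StronglyMeasurable[𝒢 n] (W n) := by
    intro n
    apply Measurable.stronglyMeasurable
    have hsum : Measurable[𝒢 n] fun ω => ∑ j ∈ Finset.Icc 1 n, Z j ω :=
      Finset.measurable_sum _ (fun j hj =>
        ((hXmeas𝒢 j n (Finset.mem_Icc.1 hj).2).pow_const 2).sub measurable_const)
    exact ((hsum.const_mul t).exp).mul_const _
  have honestep : ∀ n, (ℙ : Measure Ω)[W (n+1) | 𝒢 n] =ᵐ[ℙ] W n := by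
    intro n
    have hYdef : W (n+1) = W n * fun ω => Real.exp (t * Z (n+1) ω) * K⁻¹ := by
      funext ω
      simp only [hWdef, Pi.mul_apply]
      rw [Finset.sum_Icc_succ_top (Nat.succ_le_succ (Nat.zero_le n)), mul_add, Real.exp_add,
        pow_succ]
      ring
    set Y : Ω → ℝ := fun ω => Real.exp (t * Z (n+1) ω) * K⁻¹ with hY
    have hYint : Integrable Y ℙ := (hstep (n+1)).1.mul_const _
    have hYmean : ∫ ω, Y ω ∂ℙ = 1 := by
      rw [hY, integral_mul_const, (hstep (n+1)).2, mul_inv_cancel₀ hK.ne']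
    have hYsm : StronglyMeasurable[MeasurableSpace.comap (X (n+1)) inferInstance] Y := by
      have hc : Measurable[MeasurableSpace.comap (X (n+1)) inferInstance] (X (n+1)) :=
        comap_measurable _
      exact ((((hc.pow_const 2).sub measurable_const).const_mul t).exp.mul_const
        _).stronglyMeasurable
    have hindp : Indep (MeasurableSpace.comap (X (n+1)) inferInstance) (𝒢 n) ℙ :=
      hindep.indep_comap_natural_of_lt (fun i => (hmeas i).stronglyMeasurable) (Nat.lt_succ_self n)
    have hcond : (ℙ : Measure Ω)[Y | 𝒢 n] =ᵐ[ℙ] fun _ => ∫ ω, Y ω ∂ℙ :=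
      condExp_indep_eq (hmeas (n+1)).comap_le (𝒢.le n) hYsm hindp
    calc (ℙ : Measure Ω)[W (n+1)|𝒢 n] = (ℙ : Measure Ω)[W n * Y|𝒢 n] := by rw [hYdef]
      _ =ᵐ[ℙ] W n * (ℙ : Measure Ω)[Y|𝒢 n] :=
          condExp_mul_of_stronglyMeasurable_left (hWadapted n)
            (by rw [← hYdef]; exact hWint (n+1)) hYint
      _ =ᵐ[ℙ] W n := by
          filter_upwards [hcond] with ω hω
          simp only [Pi.mul_apply, hω, hYmean, mul_one]
  have hmart : Martingale W 𝒢 ℙ := by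
    refine ⟨fun n => hWadapted n, ?_⟩
    intro i j hij
    induction j, hij using Nat.le_induction with
    | base =>
      rw [condExp_of_stronglyMeasurable (𝒢.le i) (hWadapted i) (hWint i)]
    | succ j hij ih =>
      calc (ℙ : Measure Ω)[W (j+1)|𝒢 i]
          =ᵐ[ℙ] (ℙ : Measure Ω)[(ℙ : Measure Ω)[W (j+1)|𝒢 j]|𝒢 i] :=
            (condExp_condExp_of_le (𝒢.mono hij) (𝒢.le j)).symm
        _ =ᵐ[ℙ] (ℙ : Measure Ω)[W j|𝒢 i] := condExp_congr_ae (honestep j)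
        _ =ᵐ[ℙ] W i := ih
  have hsub : Submartingale W 𝒢 ℙ := hmart.submartingale
  have hnonneg : (0 : ℕ → Ω → ℝ) ≤ W := by
    intro n ω
    simp only [hWdef, Pi.zero_apply]
    positivity
  set S : ℕ → Set Ω :=
    fun n => {ω | a ≤ (Finset.range (n+1)).sup' Finset.nonempty_range_add_one fun k => W k ω}
    with hS
  have hbound : ∀ n, ℙ (S n) ≤ ENNReal.ofReal a⁻¹ := by
    intro n
    have h1 := maximal_ineq hsub hnonneg (ε := a.toNNReal) n
    have hca : ((a.toNNReal : ℝ≥0) : ℝ) = a := Real.coe_toNNReal a ha.le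
    rw [hca] at h1
    have h2 : ∫ ω in {ω | a ≤ (Finset.range (n+1)).sup' Finset.nonempty_range_add_one
          fun k => W k ω}, W n ω ∂ℙ ≤ ∫ ω, W n ω ∂ℙ :=
      setIntegral_le_integral (hWint n) (Filter.Eventually.of_forall fun ω => hnonneg n ω)
    have h3 : (a.toNNReal : ℝ≥0∞) * ℙ (S n) ≤ 1 := by
      calc (a.toNNReal : ℝ≥0∞) * ℙ (S n) = a.toNNReal • ℙ (S n) := rfl
        _ ≤ ENNReal.ofReal (∫ ω in {ω | a ≤ (Finset.range (n+1)).sup'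
              Finset.nonempty_range_add_one fun k => W k ω}, W n ω ∂ℙ) := h1
        _ ≤ ENNReal.ofReal (∫ ω, W n ω ∂ℙ) := ENNReal.ofReal_le_ofReal h2
        _ = 1 := by rw [hWmean n, ENNReal.ofReal_one]
    have ha0 : a.toNNReal ≠ 0 := by
      simp only [ne_eq, Real.toNNReal_eq_zero, not_le]
      exact ha
    have h4 : ℙ (S n) ≤ (a.toNNReal : ℝ≥0∞)⁻¹ :=
      ENNReal.le_inv_iff_mul_le.mpr (by rwa [mul_comm])
    calc ℙ (S n) ≤ (a.toNNReal : ℝ≥0∞)⁻¹ := h4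
      _ = ENNReal.ofReal a⁻¹ := by
        rw [← ENNReal.coe_inv ha0, ← Real.toNNReal_inv]
        rfl
  have hmono : Monotone S := by
    intro n n' hnn' ω hω
    exact le_trans hω (Finset.sup'_mono (f := fun k => W k ω)
      (Finset.range_subset_range.2 (Nat.succ_le_succ hnn')) Finset.nonempty_range_add_one)
  have hsubset : {ω | ∃ m : ℕ, M ≤ m ∧
      a * K^m ≤ Real.exp (t * ∑ j ∈ Finset.Icc 1 m, ((X j ω)^2 - 1))} ⊆ ⋃ n, S n := by
    rintro ω ⟨m, _, hineq⟩
    refine Set.mem_iUnion.2 ⟨m, ?_⟩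
    have hW : a ≤ W m ω := by
      simp only [hWdef]
      rw [inv_pow, ← div_eq_mul_inv, le_div_iff₀ (by positivity)]
      exact hineq
    exact le_trans hW (Finset.le_sup' (f := fun k => W k ω) (Finset.self_mem_range_succ m))
  calc ℙ {ω | ∃ m : ℕ, M ≤ m ∧
        a * K^m ≤ Real.exp (t * ∑ j ∈ Finset.Icc 1 m, ((X j ω)^2 - 1))}
      ≤ ℙ (⋃ n, S n) := measure_mono hsubset
    _ = ⨆ n, ℙ (S n) := hmono.measure_iUnion
    _ ≤ ENNReal.ofReal a⁻¹ := iSup_le hbound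

theorem stmt_6 {Ω : Type*} [MeasureSpace Ω] [IsProbabilityMeasure (ℙ : Measure Ω)]
    (X : ℕ → Ω → ℝ) (hmeas : ∀ j, Measurable (X j))
    (hindep : iIndepFun X ℙ)
    (hgauss : ∀ j, Measure.map (X j) ℙ = gaussianReal 0 1)
    (ε : ℝ) (hε : 0 < ε) (M : ℕ) :
    ℙ {ω | ∃ m : ℕ, M ≤ m ∧
        ε ≤ |(1 / (m : ℝ)) * ∑ j ∈ Finset.Icc 1 m, ((X j ω) ^ 2 - 1)|} ≤
      ENNReal.ofReal (2 * Real.exp (-((M : ℝ) / 2) * (ε - Real.log (1 + ε)))) := by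
  have hε1 : (0:ℝ) < 1 + ε := by linarith
  set L : ℝ := Real.log (1 + ε) with hLdef
  have hLε : L ≤ ε := by
    have := Real.log_le_sub_one_of_pos hε1
    simpa [hLdef] using this
  have hLquad : ε - ε^2/2 ≤ L := log_ge_quad hε.le
  set r : ℝ := (ε - L)/2 with hrdef
  have hr : 0 ≤ r := by rw [hrdef]; linarith
  set a : ℝ := Real.exp (M * r) with hadef
  have ha : 0 < a := Real.exp_pos _
  -- `exp (L/2)` is `sqrt (1+ε)`
  have hsqrt1ε : Real.sqrt (1 + ε) = Real.exp (L/2) := by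
    have h1 : (1 + ε) = (Real.exp (L/2))^2 := by
      rw [sq, ← Real.exp_add]
      have : L/2 + L/2 = L := by ring
      rw [this, hLdef, Real.exp_log hε1]
    rw [h1, Real.sqrt_sq (Real.exp_pos _).le]
  -- upper tail parameter
  set lam : ℝ := ε / (2*(1+ε)) with hlamdef
  have hlam_pos : 0 < lam := by rw [hlamdef]; positivity
  have hlam2 : 1 - 2*lam = (1+ε)⁻¹ := by
    rw [hlamdef]
    field_simp
    ring
  have hlam_lt : 2*lam < 1 := by
    have : (0:ℝ) < (1+ε)⁻¹ := by positivity
    linarith [hlam2]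
  have hlam_eps : lam * (1+ε) = ε/2 := by
    rw [hlamdef]
    field_simp
  have hKp : Real.exp (-lam) * (Real.sqrt (1-2*lam))⁻¹ = Real.exp (L/2 - lam) := by
    rw [hlam2, ← Real.sqrt_inv, inv_inv, hsqrt1ε, ← Real.exp_add]
    congr 1
    ring
  -- lower tail parameter
  set t2 : ℝ := -(ε/2) with ht2def
  have ht2 : 2*t2 < 1 := by rw [ht2def]; linarith
  have hKm : Real.exp (-t2) * (Real.sqrt (1-2*t2))⁻¹ = Real.exp (ε/2 - L/2) := by
    have h1 : 1 - 2*t2 = 1 + ε := by rw [ht2def]; ring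
    rw [h1, hsqrt1ε, ht2def, ← Real.exp_neg, ← Real.exp_add]
    congr 1
    ring
  clear_value L r a lam t2
  -- the two core events
  set A : Set Ω := {ω | ∃ m : ℕ, M ≤ m ∧
      a * (Real.exp (-lam) * (Real.sqrt (1-2*lam))⁻¹)^m
        ≤ Real.exp (lam * ∑ j ∈ Finset.Icc 1 m, ((X j ω)^2 - 1))} with hAdef
  set B : Set Ω := {ω | ∃ m : ℕ, M ≤ m ∧
      a * (Real.exp (-t2) * (Real.sqrt (1-2*t2))⁻¹)^m
        ≤ Real.exp (t2 * ∑ j ∈ Finset.Icc 1 m, ((X j ω)^2 - 1))} with hBdef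
  have hA : ℙ A ≤ ENNReal.ofReal a⁻¹ :=
    core_maximal X hmeas hindep hgauss hlam_lt M ha
  have hB : ℙ B ≤ ENNReal.ofReal a⁻¹ :=
    core_maximal X hmeas hindep hgauss ht2 M ha
  -- inclusion
  have hsubset : {ω | ∃ m : ℕ, M ≤ m ∧
      ε ≤ |(1 / (m : ℝ)) * ∑ j ∈ Finset.Icc 1 m, ((X j ω) ^ 2 - 1)|} ⊆ A ∪ B := by
    rintro ω ⟨m, hMm, habs⟩
    set Ssum : ℝ := ∑ j ∈ Finset.Icc 1 m, ((X j ω)^2 - 1) with hSsum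
    have hm0 : m ≠ 0 := by
      rintro rfl
      simp only [Nat.cast_zero, div_zero, zero_mul, abs_zero] at habs
      linarith
    have hmpos : (0:ℝ) < m := by
      have := Nat.pos_of_ne_zero hm0
      exact_mod_cast this
    have hMm' : (M:ℝ) ≤ m := by exact_mod_cast hMm
    have habs' : ε * m ≤ |Ssum| := by
      have h1 : |(1 / (m : ℝ)) * Ssum| = |Ssum| / m := by
        rw [abs_mul, abs_of_pos (by positivity : (0:ℝ) < 1/(m:ℝ))]
        ring
      rw [h1] at habs
      calc ε * m ≤ (|Ssum| / m) * m := by nlinarith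
        _ = |Ssum| := by field_simp
    rcases le_abs.mp habs' with hcase | hcase
    · left
      refine ⟨m, hMm, ?_⟩
      rw [hKp, ← Real.exp_nat_mul, hadef, ← Real.exp_add]
      have key : (M:ℝ) * r + m * (L/2 - lam) ≤ lam * Ssum := by
        have h1 : lam * (ε * m) ≤ lam * Ssum :=
          mul_le_mul_of_nonneg_left hcase hlam_pos.le
        have h2 : (M:ℝ) * r ≤ m * r := mul_le_mul_of_nonneg_right hMm' hr
        have h3 : lam * ε + lam = ε/2 := by linear_combination hlam_eps
        have h4 : (m:ℝ) * (L/2 - lam) + m * r = lam * (ε * m) := by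
          rw [hrdef]; linear_combination (-(m:ℝ)) * h3
        linarith [h1, h2, h4]
      exact Real.exp_le_exp.mpr key
    · right
      refine ⟨m, hMm, ?_⟩
      rw [hKm, ← Real.exp_nat_mul, hadef, ← Real.exp_add]
      have key : (M:ℝ) * r + m * (ε/2 - L/2) ≤ t2 * Ssum := by
        have h1 : (ε/2) * (ε * m) ≤ (ε/2) * (-Ssum) :=
          mul_le_mul_of_nonneg_left hcase (by positivity)
        have h2 : (M:ℝ) * r ≤ m * r := mul_le_mul_of_nonneg_right hMm' hr
        have ht2S : t2 * Ssum = (ε/2) * (-Ssum) := by rw [ht2def]; ring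
        rw [ht2S]
        have h4 : ε - L ≤ ε^2/2 := by linarith [hLquad]
        have h5 : (m:ℝ)*(ε - L) ≤ m*(ε^2/2) := mul_le_mul_of_nonneg_left h4 hmpos.le
        have heq : (m:ℝ)*r + m*(ε/2 - L/2) = m*(ε - L) := by rw [hrdef]; ring
        have heq2 : (ε/2)*(ε*m) = (m:ℝ)*(ε^2/2) := by ring
        linarith [h1, h2, h5, heq, heq2]
      exact Real.exp_le_exp.mpr key
  calc ℙ {ω | ∃ m : ℕ, M ≤ m ∧
        ε ≤ |(1 / (m : ℝ)) * ∑ j ∈ Finset.Icc 1 m, ((X j ω) ^ 2 - 1)|}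
      ≤ ℙ (A ∪ B) := measure_mono hsubset
    _ ≤ ℙ A + ℙ B := measure_union_le A B
    _ ≤ ENNReal.ofReal a⁻¹ + ENNReal.ofReal a⁻¹ := add_le_add hA hB
    _ = ENNReal.ofReal (2 * Real.exp (-((M : ℝ) / 2) * (ε - L))) := by
        rw [← ENNReal.ofReal_add (by positivity) (by positivity)]
        congr 1
        rw [hadef, ← Real.exp_neg, ← two_mul]
        congr 2
        rw [hrdef]
        ring
end

section
/- For all ε > 0, with λ := (M/2)·ε/(1+ε) and 0 < 2λ/M < 1, the following bound holds: exp(−λε)·( exp(−λ)·(1−2λ/M)^{−M/2} + exp(λ)·(1+2λ/M)^{−M/2} ) ≤ 2·exp(−(M/2)·(ε − log(1+ε))). -/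
lemma aux_log_lb (u : ℝ) (hu : 1 ≤ u) : 2 * (u - 1) / (u + 1) ≤ Real.log u := by
  set f : ℝ → ℝ := fun x => Real.log x - 2 * (x - 1) / (x + 1) with hf
  have key : ∀ x : ℝ, 1 ≤ x → HasDerivAt f (1 / x - 4 / (x + 1) ^ 2) x := by
    intro x hx
    have hx0 : x ≠ 0 := by linarith
    have hx1 : x + 1 ≠ 0 := by linarith
    have h1 : HasDerivAt Real.log (1 / x) x := by
      simpa [one_div] using Real.hasDerivAt_log hx0
    have h2 : HasDerivAt (fun x : ℝ => 2 * (x - 1) / (x + 1)) (4 / (x + 1) ^ 2) x := by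
      have hn : HasDerivAt (fun x : ℝ => 2 * (x - 1)) 2 x := by
        simpa using ((hasDerivAt_id x).sub_const 1).const_mul 2
      have hd : HasDerivAt (fun x : ℝ => x + 1) 1 x := (hasDerivAt_id x).add_const 1
      have := hn.div hd hx1
      exact this.congr_deriv (by ring)
    exact h1.sub h2
  have mono : MonotoneOn f (Set.Ici 1) := by
    apply monotoneOn_of_deriv_nonneg (convex_Ici 1)
    · intro x hx
      exact ((key x hx).differentiableAt).continuousAt.continuousWithinAt
    · intro x hx
      rw [interior_Ici] at hx
      exact ((key x (le_of_lt hx)).differentiableAt).differentiableWithinAt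
    · intro x hx
      rw [interior_Ici] at hx
      have hx' : 1 < x := hx
      rw [(key x (le_of_lt hx')).deriv]
      have hx0 : 0 < x := by linarith
      have hx1 : 0 < (x + 1) ^ 2 := by positivity
      rw [sub_nonneg, div_le_div_iff₀ hx1 hx0]
      nlinarith [sq_nonneg (x - 1)]
  have h1 : f 1 ≤ f u := mono (by simp) hu hu
  simp only [hf, Real.log_one] at h1
  norm_num at h1
  linarith

theorem stmt_7 (ε : ℝ) (hε : 0 < ε) (M : ℕ) (l : ℝ)
    (hl : l = ((M : ℝ) / 2) * ε / (1 + ε))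
    (h0 : 0 < 2 * l / (M : ℝ)) (h1 : 2 * l / (M : ℝ) < 1) :
    Real.exp (-l * ε) *
        (Real.exp (-l) * (1 - 2 * l / (M : ℝ)) ^ (-(M : ℝ) / 2) +
          Real.exp l * (1 + 2 * l / (M : ℝ)) ^ (-(M : ℝ) / 2)) ≤
      2 * Real.exp (-((M : ℝ) / 2) * (ε - Real.log (1 + ε))) := by
  have hM : 0 < (M : ℝ) := by
    rcases Nat.eq_zero_or_pos M with h | h
    · subst h; simp at h0
    · exact_mod_cast h
  have hε1 : (0:ℝ) < 1 + ε := by linarith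
  set m : ℝ := (M : ℝ) / 2 with hm
  have hm0 : 0 < m := by positivity
  have h2l : 2 * l / (M : ℝ) = ε / (1 + ε) := by
    rw [hl]; field_simp; ring
  have e1 : 1 - 2 * l / (M : ℝ) = 1 / (1 + ε) := by
    rw [h2l]; field_simp; ring
  have e2 : 1 + 2 * l / (M : ℝ) = (1 + 2 * ε) / (1 + ε) := by
    rw [h2l]; field_simp; ring
  have hp1 : (0:ℝ) < 1 / (1 + ε) := by positivity
  have hp2 : (0:ℝ) < (1 + 2 * ε) / (1 + ε) := by positivity
  rw [e1, e2, Real.rpow_def_of_pos hp1, Real.rpow_def_of_pos hp2]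
  have hlog1 : Real.log (1 / (1 + ε)) = -Real.log (1 + ε) := by
    rw [one_div, Real.log_inv]
  have hlog2 : Real.log ((1 + 2 * ε) / (1 + ε)) =
      Real.log (1 + 2 * ε) - Real.log (1 + ε) := by
    rw [Real.log_div (by linarith) (by linarith)]
  rw [hlog1, hlog2]
  rw [mul_add, ← Real.exp_add, ← Real.exp_add, ← Real.exp_add, ← Real.exp_add]
  have hle : l * (1 + ε) = m * ε := by
    rw [hl]; field_simp
  have hA : -l * ε + (-l + -Real.log (1 + ε) * (-(M : ℝ) / 2)) =
      -((M : ℝ) / 2) * (ε - Real.log (1 + ε)) := by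
    have : -l * ε + -l = -(l * (1 + ε)) := by ring
    rw [show -l * ε + (-l + -Real.log (1 + ε) * (-(M : ℝ) / 2)) =
        -(l * (1 + ε)) + Real.log (1 + ε) * ((M : ℝ) / 2) by ring, hle]
    rw [hm] at *
    ring
  have hB : -l * ε + (l + (Real.log (1 + 2 * ε) - Real.log (1 + ε)) * (-(M : ℝ) / 2)) ≤
      -((M : ℝ) / 2) * (ε - Real.log (1 + ε)) := by
    have haux : 2 * ε / (1 + ε) ≤ Real.log (1 + 2 * ε) := by
      have := aux_log_lb (1 + 2 * ε) (by linarith)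
      have heq : 2 * ((1 + 2 * ε) - 1) / ((1 + 2 * ε) + 1) = 2 * ε / (1 + ε) := by
        rw [show (1 + 2 * ε) + 1 = 2 * (1 + ε) by ring]
        rw [show 2 * ((1 + 2 * ε) - 1) = 2 * (2 * ε) by ring]
        rw [mul_div_mul_left _ _ (by norm_num : (2:ℝ) ≠ 0)]
      rwa [heq] at this
    -- inequality: -lε + l - m log(1+2ε) ≤ -mε, i.e. -lε + l + mε ≤ m log(1+2ε)
    have hl2 : -l * ε + l + m * ε = m * (2 * ε / (1 + ε)) := by
      rw [hl, hm]; field_simp; ring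
    have hmul : m * (2 * ε / (1 + ε)) ≤ m * Real.log (1 + 2 * ε) :=
      mul_le_mul_of_nonneg_left haux (le_of_lt hm0)
    have e3 : -l * ε + (l + (Real.log (1 + 2 * ε) - Real.log (1 + ε)) * (-(M : ℝ) / 2))
        = (-l * ε + l + m * ε) - m * Real.log (1 + 2 * ε) + m * Real.log (1 + ε) - m * ε := by
      rw [hm]; ring
    have e4 : -((M : ℝ) / 2) * (ε - Real.log (1 + ε)) = -(m * ε) + m * Real.log (1 + ε) := by
      rw [hm]; ring
    rw [e3, e4]
    linarith
  calc Real.exp (-l * ε + (-l + -Real.log (1 + ε) * (-(M : ℝ) / 2))) +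
        Real.exp (-l * ε + (l + (Real.log (1 + 2 * ε) - Real.log (1 + ε)) * (-(M : ℝ) / 2)))
      ≤ Real.exp (-((M : ℝ) / 2) * (ε - Real.log (1 + ε))) +
        Real.exp (-((M : ℝ) / 2) * (ε - Real.log (1 + ε))) := by
        exact add_le_add (le_of_eq (by rw [hA])) (Real.exp_le_exp.mpr hB)
    _ = 2 * Real.exp (-((M : ℝ) / 2) * (ε - Real.log (1 + ε))) := by ring
end

section
/- In the setting of Lemma 2.2 (x^†=0, σ_j²=e^{−j}, data y^δ = δZ) on the event Ω′_δ where (Z,u_j)=0 for m_δ ≤ j ≤ 2m_δ and |(Z,u_{m_δ−1})|=√2: for every k ≤ m_δ−1 one has Ψ_{2m_δ}(k, y^δ) := σ_k^{−1}·√(∑_{j=k}^{2m_δ}(y^δ,u_j)²) ≥ √2·e^{−(m_δ−1)}·δ > 0, while Ψ_{2m_δ}(m_δ, y^δ) = 0; consequently argmin_{k ≤ m_δ} Ψ_{2m_δ}(k,y^δ) ≥ m_δ. -/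
/-!
Below `m_δ` the tail sum still contains the coefficient `δ z_{m_δ-1}` of modulus `√2 δ`, and
`σ_k ≤ 1`, so `Ψ(k) ≥ √2 δ`; from `m_δ` on every coefficient vanishes, so `Ψ(m_δ) = 0` and no
`k < m_δ` can minimise `Ψ` over `k ≤ m_δ`.
-/

open Finset Real

/-- The functional `Ψ_N(k, y)`, with `y j` standing for the coefficient `(y, u_j)`. -/
noncomputable def discrepancy (σ : ℕ → ℝ) (N : ℕ) (y : ℕ → ℝ) (k : ℕ) : ℝ :=
  (σ k)⁻¹ * √(∑ j ∈ Icc k N, y j ^ 2)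

theorem discrepancy_eq_zero {σ : ℕ → ℝ} {N : ℕ} {y : ℕ → ℝ} {k : ℕ}
    (hy : ∀ j, k ≤ j → j ≤ N → y j = 0) : discrepancy σ N y k = 0 := by
  have hsum : ∑ j ∈ Icc k N, y j ^ 2 = 0 :=
    sum_eq_zero fun j hj ↦ by
      rw [mem_Icc] at hj
      simp [hy j hj.1 hj.2]
  simp [discrepancy, hsum]

theorem abs_le_discrepancy {σ : ℕ → ℝ} {N : ℕ} {y : ℕ → ℝ} {k i : ℕ}
    (hσ0 : 0 < σ k) (hσ1 : σ k ≤ 1) (hki : k ≤ i) (hiN : i ≤ N) :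
    |y i| ≤ discrepancy σ N y k := by
  have hi : |y i| ≤ √(∑ j ∈ Icc k N, y j ^ 2) :=
    Real.abs_le_sqrt <|
      single_le_sum (f := fun j ↦ y j ^ 2) (fun _ _ ↦ sq_nonneg _) (mem_Icc.2 ⟨hki, hiN⟩)
  calc |y i| ≤ 1 * √(∑ j ∈ Icc k N, y j ^ 2) := by rwa [one_mul]
    _ ≤ discrepancy σ N y k :=
      mul_le_mul_of_nonneg_right ((one_le_inv₀ hσ0).2 hσ1) (sqrt_nonneg _)

theorem stmt_15_general (δ : ℝ) (hδ : 0 < δ)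
    (mδ : ℕ)
    (z : ℕ → ℝ) (hz1 : |z (mδ - 1)| = Real.sqrt 2)
    (hz0 : ∀ j : ℕ, mδ ≤ j → j ≤ 2 * mδ → z j = 0)
    (Ψ : ℕ → ℝ)
    (hΨ : ∀ k, Ψ k = (Real.exp (-(k : ℝ) / 2))⁻¹ *
        Real.sqrt (∑ j ∈ Finset.Icc k (2 * mδ), (δ * z j) ^ 2)) :
    (∀ k : ℕ, k ≤ mδ - 1 → Real.sqrt 2 * Real.exp (-((mδ : ℝ) - 1)) * δ ≤ Ψ k) ∧
    0 < Real.sqrt 2 * Real.exp (-((mδ : ℝ) - 1)) * δ ∧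
    Ψ mδ = 0 ∧
    ∀ k : ℕ, k ≤ mδ → (∀ k' : ℕ, k' ≤ mδ → Ψ k ≤ Ψ k') → mδ ≤ k := by
  obtain rfl : Ψ = discrepancy (fun k ↦ exp (-(k : ℝ) / 2)) (2 * mδ) (δ * z ·) := funext hΨ
  set σ : ℕ → ℝ := fun k ↦ exp (-(k : ℝ) / 2)
  -- for `mδ = 0` the index `mδ - 1` truncates to `0`, where `hz0` contradicts `hz1`
  have hm : 1 ≤ mδ := by
    by_contra! h
    obtain rfl : mδ = 0 := by omega
    simp only [zero_tsub, hz0 0 le_rfl le_rfl, abs_zero] at hz1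
    exact (sqrt_pos.2 two_pos).ne hz1
  have hlow (k : ℕ) (hk : k ≤ mδ - 1) :
      √2 * exp (-((mδ : ℝ) - 1)) * δ ≤ discrepancy σ (2 * mδ) (δ * z ·) k :=
    calc √2 * exp (-((mδ : ℝ) - 1)) * δ ≤ √2 * 1 * δ := by
          gcongr
          exact exp_le_one_iff.2 (by linarith [show (1 : ℝ) ≤ mδ by exact_mod_cast hm])
      _ = |δ * z (mδ - 1)| := by rw [abs_mul, hz1, abs_of_pos hδ]; ring
      _ ≤ discrepancy σ (2 * mδ) (δ * z ·) k :=
          abs_le_discrepancy (y := (δ * z ·)) (i := mδ - 1) (exp_pos _)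
            (exp_le_one_iff.2 (by linarith [k.cast_nonneg (α := ℝ)])) hk (by omega)
  have hzero : discrepancy σ (2 * mδ) (δ * z ·) mδ = 0 :=
    discrepancy_eq_zero fun j hj hjN ↦ by simp [hz0 j hj hjN]
  have hpos : 0 < √2 * exp (-((mδ : ℝ) - 1)) * δ := by positivity
  refine ⟨hlow, hpos, hzero, fun k _ hmin ↦ ?_⟩
  by_contra! hk
  linarith [hlow k (by omega), hmin mδ le_rfl]

theorem stmt_15 (δ : ℝ) (hδ : 0 < δ) (hδ1 : δ < 1)
    (mδ : ℕ) (hmδ : mδ = ⌈-3 * Real.log δ / (1 - Real.log 2)⌉₊ + 1)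
    (z : ℕ → ℝ) (hz1 : |z (mδ - 1)| = Real.sqrt 2)
    (hz0 : ∀ j : ℕ, mδ ≤ j → j ≤ 2 * mδ → z j = 0)
    (Ψ : ℕ → ℝ)
    (hΨ : ∀ k, Ψ k = (Real.exp (-(k : ℝ) / 2))⁻¹ *
        Real.sqrt (∑ j ∈ Finset.Icc k (2 * mδ), (δ * z j) ^ 2)) :
    (∀ k : ℕ, k ≤ mδ - 1 → Real.sqrt 2 * Real.exp (-((mδ : ℝ) - 1)) * δ ≤ Ψ k) ∧
    0 < Real.sqrt 2 * Real.exp (-((mδ : ℝ) - 1)) * δ ∧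
    Ψ mδ = 0 ∧
    ∀ k : ℕ, k ≤ mδ → (∀ k' : ℕ, k' ≤ mδ → Ψ k ≤ Ψ k') → mδ ≤ k :=
  stmt_15_general δ hδ mδ z hz1 hz0 Ψ hΨ
end
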